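/- arXiv:2104.03687 — 5 statements merged into one kernel-verified Lean document; each statement's English description precedes it below -/
import Mathlib

section
/- Let (X, 𝓑) be a primitive uniform space and let f : X → X be a mapping. Assume Y ⊆ X is nonempty, f(Y) ⊆ Y, x ∈ c_𝓑(f, Y), and f(Y ∩ B(x)) ⊆ B(f(x)) for every B ∈ 𝓑. Then f(x) ∈ c_𝓑(f, Y); moreover, if c_𝓑(f, Y) is a singleton, then f(x) = x, i.e. x is a fixed point of f. -/
/-- For an entourage `B ⊆ X × X` and `x : X`, `entBall B x = {y | (x, y) ∈ B}`. -/
def entBall {X : Type*} (B : Set (X × X)) (x : X) : Set X := {y | (x, y) ∈ B}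

/-- The centre `c_𝓑(f, Y)` of a mapping `f : X → X` on `Y ⊆ X`: the set of points `x` with
`⋂ {B ∈ 𝓑 : fⁿ(Y) ⊆ B(z) for some n and some z} = ⋂ {B ∈ 𝓑 : fⁿ(Y) ⊆ B(x) for some n}`. -/
def centreMap {X : Type*} (𝓑 : Set (Set (X × X))) (f : X → X) (Y : Set X) : Set X :=
  {x | ⋂₀ {B ∈ 𝓑 | ∃ n : ℕ, ∃ z : X, f^[n] '' Y ⊆ entBall B z} =
       ⋂₀ {B ∈ 𝓑 | ∃ n : ℕ, f^[n] '' Y ⊆ entBall B x}}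

/-- Theorem 4: in a primitive uniform space `(X, 𝓑)`, if `Y ⊆ X` is
nonempty, `f(Y) ⊆ Y`, `x ∈ c_𝓑(f, Y)` and `f(Y ∩ B(x)) ⊆ B(f(x))` for every `B ∈ 𝓑`,
then `f(x) ∈ c_𝓑(f, Y)`; and if `c_𝓑(f, Y)` is a singleton, then `f(x) = x`. -/
theorem stmt0 {X : Type*} [Nonempty X] (𝓑 : Set (Set (X × X)))
    (hUniv : (Set.univ : Set (X × X)) ∈ 𝓑)
    (f : X → X) (Y : Set X) (hY : Y.Nonempty) (hfY : f '' Y ⊆ Y)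
    (x : X) (hx : x ∈ centreMap 𝓑 f Y)
    (hB : ∀ B ∈ 𝓑, f '' (Y ∩ entBall B x) ⊆ entBall B (f x)) :
    f x ∈ centreMap 𝓑 f Y ∧
      ((∃ w, centreMap 𝓑 f Y = {w}) → f x = x) := by
  have hiter : ∀ n : ℕ, f^[n] '' Y ⊆ Y := by
    intro n
    induction n with
    | zero => simp
    | succ n ih =>
      intro y hy
      obtain ⟨a, ha, rfl⟩ := hy
      rw [Function.iterate_succ_apply']
      exact hfY ⟨f^[n] a, ih ⟨a, ha, rfl⟩, rfl⟩
  have hmono : {B ∈ 𝓑 | ∃ n : ℕ, f^[n] '' Y ⊆ entBall B x} ⊆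
      {B ∈ 𝓑 | ∃ n : ℕ, f^[n] '' Y ⊆ entBall B (f x)} := by
    rintro B ⟨hBmem, n, hn⟩
    refine ⟨hBmem, n + 1, ?_⟩
    intro y hy
    obtain ⟨a, ha, rfl⟩ := hy
    rw [Function.iterate_succ_apply']
    exact hB B hBmem ⟨f^[n] a, ⟨hiter n ⟨a, ha, rfl⟩, hn ⟨a, ha, rfl⟩⟩, rfl⟩
  have hsub : {B ∈ 𝓑 | ∃ n : ℕ, f^[n] '' Y ⊆ entBall B (f x)} ⊆
      {B ∈ 𝓑 | ∃ n : ℕ, ∃ z : X, f^[n] '' Y ⊆ entBall B z} := by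
    rintro B ⟨hBmem, n, hn⟩
    exact ⟨hBmem, n, f x, hn⟩
  have hfx : f x ∈ centreMap 𝓑 f Y := by
    have hx' := hx
    simp only [centreMap, Set.mem_setOf_eq] at hx' ⊢
    apply Set.Subset.antisymm
    · exact Set.sInter_subset_sInter hsub
    · calc ⋂₀ {B ∈ 𝓑 | ∃ n : ℕ, f^[n] '' Y ⊆ entBall B (f x)}
          ⊆ ⋂₀ {B ∈ 𝓑 | ∃ n : ℕ, f^[n] '' Y ⊆ entBall B x} :=
            Set.sInter_subset_sInter hmono
        _ = _ := hx'.symm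
  refine ⟨hfx, fun ⟨w, hw⟩ => ?_⟩
  have h1 : f x = w := by rw [hw] at hfx; exact hfx
  have h2 : x = w := by rw [hw] at hx; exact hx
  rw [h1, h2]
end

section
/- Let (X, 𝓑) be a primitive uniform space and let f : X → X be a nonexpansive mapping. Assume Y ⊆ X is nonempty and f(Y) ⊆ Y. Then x ∈ c_𝓑(f, Y) implies f(x) ∈ c_𝓑(f, Y); moreover, if x ∈ c_𝓑(f, Y) and c_𝓑(f, Y) is a singleton, then f(x) = x, i.e. x is a fixed point of f. -/
/-- `f : X → X` is nonexpansive w.r.t. `𝓑` if `f(B(x)) ⊆ B(f(x))` for all `x` and `B ∈ 𝓑`. -/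
def Nonexpansive {X : Type*} (𝓑 : Set (Set (X × X))) (f : X → X) : Prop :=
  ∀ x : X, ∀ B ∈ 𝓑, f '' entBall B x ⊆ entBall B (f x)

/-!
Always `⋂ {B | some fⁿ(Y) ⊆ B(z)} ⊆ ⋂ {B | some fⁿ(Y) ⊆ B(y)}`, so `y` is central exactly when
the reverse inclusion holds. By nonexpansiveness, `fⁿ(Y) ⊆ B(x)` gives `fⁿ⁺¹(Y) ⊆ B(f x)`, so the
intersection at `f x` is squeezed between the one over all `z` and the one at the central point `x`.
-/

def coveringEntourages {X : Type*} (𝓑 : Set (Set (X × X))) (f : X → X) (Y : Set X) (x : X) :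
    Set (Set (X × X)) :=
  {B ∈ 𝓑 | ∃ n : ℕ, f^[n] '' Y ⊆ entBall B x}

section Centre

variable {X : Type*} {𝓑 : Set (Set (X × X))} {f : X → X} {Y : Set X}

theorem sInter_subset_sInter_coveringEntourages (y : X) :
    ⋂₀ {B ∈ 𝓑 | ∃ n : ℕ, ∃ z : X, f^[n] '' Y ⊆ entBall B z} ⊆
      ⋂₀ coveringEntourages 𝓑 f Y y :=
  Set.sInter_subset_sInter fun _ ⟨hB, n, hn⟩ => ⟨hB, n, y, hn⟩

theorem mem_centreMap_of_sInter_subset {y : X}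
    (h : ⋂₀ coveringEntourages 𝓑 f Y y ⊆
      ⋂₀ {B ∈ 𝓑 | ∃ n : ℕ, ∃ z : X, f^[n] '' Y ⊆ entBall B z}) :
    y ∈ centreMap 𝓑 f Y :=
  (sInter_subset_sInter_coveringEntourages y).antisymm h

theorem Nonexpansive.coveringEntourages_subset (hf : Nonexpansive 𝓑 f) (x : X) :
    coveringEntourages 𝓑 f Y x ⊆ coveringEntourages 𝓑 f Y (f x) := by
  rintro B ⟨hB, n, hn⟩
  refine ⟨hB, n + 1, ?_⟩
  rw [Function.iterate_succ', Set.image_comp]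
  exact (Set.image_mono hn).trans (hf x B hB)

theorem Nonexpansive.mapsTo_centreMap (hf : Nonexpansive 𝓑 f) :
    Set.MapsTo f (centreMap 𝓑 f Y) (centreMap 𝓑 f Y) := fun x hx =>
  mem_centreMap_of_sInter_subset <|
    (Set.sInter_subset_sInter (hf.coveringEntourages_subset x)).trans_eq hx.symm

end Centre

theorem stmt1_general {X : Type*} (𝓑 : Set (Set (X × X)))
    (f : X → X) (hf : Nonexpansive 𝓑 f)
    (Y : Set X)
    (x : X) (hx : x ∈ centreMap 𝓑 f Y) :
    f x ∈ centreMap 𝓑 f Y ∧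
      ((∃ w, centreMap 𝓑 f Y = {w}) → f x = x) := by
  have hfx : f x ∈ centreMap 𝓑 f Y := hf.mapsTo_centreMap hx
  refine ⟨hfx, fun ⟨w, hw⟩ => ?_⟩
  rw [hw] at hx hfx
  exact hfx.trans hx.symm

/-- Theorem 6: in a primitive uniform space `(X, 𝓑)`, if `f` is
nonexpansive, `Y ⊆ X` is nonempty and `f(Y) ⊆ Y`, then `x ∈ c_𝓑(f, Y)` implies
`f(x) ∈ c_𝓑(f, Y)`; and if moreover `c_𝓑(f, Y)` is a singleton, then `f(x) = x`. -/
theorem stmt1 {X : Type*} [Nonempty X] (𝓑 : Set (Set (X × X)))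
    (hUniv : (Set.univ : Set (X × X)) ∈ 𝓑)
    (f : X → X) (hf : Nonexpansive 𝓑 f)
    (Y : Set X) (hY : Y.Nonempty) (hfY : f '' Y ⊆ Y)
    (x : X) (hx : x ∈ centreMap 𝓑 f Y) :
    f x ∈ centreMap 𝓑 f Y ∧
      ((∃ w, centreMap 𝓑 f Y = {w}) → f x = x) :=
  stmt1_general 𝓑 f hf Y x hx
end

section
/- Let (X, 𝓑) be a primitive uniform space and let F : X → 2^X be a multivalued mapping with nonempty values such that for every x ∈ X the centre c_𝓑(F(x)) is a singleton contained in F(x). Define f : X → X by letting f(x) be the unique element of c_𝓑(F(x)). Assume Y ⊆ X is nonempty, f(Y) ⊆ Y, x ∈ c_𝓑(f, Y), and f(Y ∩ B(x)) ⊆ B(f(x)) for every B ∈ 𝓑. Then f(x) ∈ c_𝓑(f, Y); moreover, if c_𝓑(f, Y) is a singleton, then x ∈ F(x), i.e. x is a fixed point of F. -/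
/-- The centre `c_𝓑(A)` of a set `A ⊆ X`: points `x` with
`⋂ {B ∈ 𝓑 : A ⊆ B(z) for some z} = ⋂ {B ∈ 𝓑 : A ⊆ B(x)}`. -/
def centreSet {X : Type*} (𝓑 : Set (Set (X × X))) (A : Set X) : Set X :=
  {x | ⋂₀ {B ∈ 𝓑 | ∃ z : X, A ⊆ entBall B z} = ⋂₀ {B ∈ 𝓑 | A ⊆ entBall B x}}

/-- `c_𝓑(f, Y)` is the set of points `x` at which `⋂₀ iterateEntourages 𝓑 f Y x` is smallest. -/
def iterateEntourages {X : Type*} (𝓑 : Set (Set (X × X))) (f : X → X) (Y : Set X) (x : X) :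
    Set (Set (X × X)) :=
  {B ∈ 𝓑 | ∃ n : ℕ, f^[n] '' Y ⊆ entBall B x}

section CentreMap

variable {X : Type*} {𝓑 : Set (Set (X × X))} {f : X → X} {Y : Set X} {x : X}

lemma sInter_iterateEntourages_subset_of_mem_centreMap (hx : x ∈ centreMap 𝓑 f Y) (y : X) :
    ⋂₀ iterateEntourages 𝓑 f Y x ⊆ ⋂₀ iterateEntourages 𝓑 f Y y := by
  rw [← show _ = ⋂₀ iterateEntourages 𝓑 f Y x from hx]
  exact Set.sInter_subset_sInter fun B ⟨hB, n, hn⟩ => ⟨hB, n, y, hn⟩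

lemma mem_centreMap_of_sInter_subset_s2
    (h : ∀ y, ⋂₀ iterateEntourages 𝓑 f Y x ⊆ ⋂₀ iterateEntourages 𝓑 f Y y) :
    x ∈ centreMap 𝓑 f Y := by
  refine Set.Subset.antisymm ?_ fun p hp B ⟨hB, n, y, hn⟩ => h y hp B ⟨hB, n, hn⟩
  exact Set.sInter_subset_sInter fun B ⟨hB, n, hn⟩ => ⟨hB, n, x, hn⟩

/-- One more application of `f` moves an iterate lying in `B(x)` into `B(f x)`. -/
lemma iterateEntourages_subset_map (hfY : f '' Y ⊆ Y)
    (hB : ∀ B ∈ 𝓑, f '' (Y ∩ entBall B x) ⊆ entBall B (f x)) :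
    iterateEntourages 𝓑 f Y x ⊆ iterateEntourages 𝓑 f Y (f x) := by
  rintro B ⟨hB𝓑, n, hn⟩
  have hYn : f^[n] '' Y ⊆ Y := (Set.mapsTo_iff_image_subset.2 hfY).iterate n |>.image_subset
  refine ⟨hB𝓑, n + 1, ?_⟩
  rw [Function.iterate_succ', Set.image_comp]
  exact (Set.image_mono (Set.subset_inter hYn hn)).trans (hB B hB𝓑)

lemma map_mem_centreMap (hfY : f '' Y ⊆ Y) (hx : x ∈ centreMap 𝓑 f Y)
    (hB : ∀ B ∈ 𝓑, f '' (Y ∩ entBall B x) ⊆ entBall B (f x)) :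
    f x ∈ centreMap 𝓑 f Y :=
  mem_centreMap_of_sInter_subset_s2 fun y =>
    (Set.sInter_subset_sInter (iterateEntourages_subset_map hfY hB)).trans
      (sInter_iterateEntourages_subset_of_mem_centreMap hx y)

end CentreMap

theorem stmt2_general {X : Type*} (𝓑 : Set (Set (X × X)))
    (F : X → Set X)
    (f : X → X) (hfF : ∀ x, f x ∈ F x)
    (Y : Set X) (hfY : f '' Y ⊆ Y)
    (x : X) (hx : x ∈ centreMap 𝓑 f Y)
    (hB : ∀ B ∈ 𝓑, f '' (Y ∩ entBall B x) ⊆ entBall B (f x)) :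
    f x ∈ centreMap 𝓑 f Y ∧
      ((∃ w, centreMap 𝓑 f Y = {w}) → x ∈ F x) := by
  have hfx := map_mem_centreMap hfY hx hB
  refine ⟨hfx, ?_⟩
  rintro ⟨w, hw⟩
  rw [hw] at hx hfx
  have hfixed : f x = x := hfx.trans hx.symm
  simpa [hfixed] using hfF x

/-- Theorem 7: let `(X, 𝓑)` be a primitive uniform space and `F : X → 2^X`
a multivalued mapping with nonempty values such that each `c_𝓑(F(x))` is a singleton `{f x}`
contained in `F(x)`. If `Y ⊆ X` is nonempty, `f(Y) ⊆ Y`, `x ∈ c_𝓑(f, Y)` and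
`f(Y ∩ B(x)) ⊆ B(f(x))` for every `B ∈ 𝓑`, then `f(x) ∈ c_𝓑(f, Y)`; and if `c_𝓑(f, Y)` is
a singleton, then `x ∈ F(x)`. -/
theorem stmt2 {X : Type*} [Nonempty X] (𝓑 : Set (Set (X × X)))
    (hUniv : (Set.univ : Set (X × X)) ∈ 𝓑)
    (F : X → Set X) (hFne : ∀ x, (F x).Nonempty)
    (f : X → X) (hfc : ∀ x, centreSet 𝓑 (F x) = {f x}) (hfF : ∀ x, f x ∈ F x)
    (Y : Set X) (hY : Y.Nonempty) (hfY : f '' Y ⊆ Y)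
    (x : X) (hx : x ∈ centreMap 𝓑 f Y)
    (hB : ∀ B ∈ 𝓑, f '' (Y ∩ entBall B x) ⊆ entBall B (f x)) :
    f x ∈ centreMap 𝓑 f Y ∧
      ((∃ w, centreMap 𝓑 f Y = {w}) → x ∈ F x) :=
  stmt2_general 𝓑 F f hfF Y hfY x hx hB
end

section
/- Let (X, 𝓑) be a primitive uniform space and let F : X → 2^X be a multivalued mapping with nonempty values such that for every x ∈ X the centre c_𝓑(F(x)) is a singleton contained in F(x). Define f : X → X by letting f(x) be the unique element of c_𝓑(F(x)), and assume f is nonexpansive. Assume Y ⊆ X is nonempty, f(Y) ⊆ Y, and x ∈ c_𝓑(f, Y). Then f(x) ∈ c_𝓑(f, Y); moreover, if c_𝓑(f, Y) is a singleton, then x ∈ F(x), i.e. x is a fixed point of F. -/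
/-! Nonexpansiveness pushes every `B(x) ⊇ fⁿ(Y)` forward to `B(f x) ⊇ fⁿ⁺¹(Y)`, so the family of
entourages centred at `f x` contains the one centred at `x`; its intersection is therefore squeezed
between the minimal one and that of `x`, which coincide. If the centre is a singleton, `x = f x`,
and `f x ∈ F x` by hypothesis. -/

theorem Nonexpansive.image_iterate_succ_subset_entBall {X : Type*} {𝓑 : Set (Set (X × X))}
    {f : X → X} (hf : Nonexpansive 𝓑 f) {B : Set (X × X)} (hB : B ∈ 𝓑) {Y : Set X} {n : ℕ}
    {x : X} (h : f^[n] '' Y ⊆ entBall B x) : f^[n + 1] '' Y ⊆ entBall B (f x) := by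
  rw [Function.iterate_succ', Set.image_comp]
  exact (Set.image_mono h).trans (hf x B hB)

theorem sInter_anyCentre_subset_sInter_centre {X : Type*} (𝓑 : Set (Set (X × X)))
    (f : X → X) (Y : Set X) (z : X) :
    ⋂₀ {B ∈ 𝓑 | ∃ n : ℕ, ∃ z : X, f^[n] '' Y ⊆ entBall B z} ⊆
      ⋂₀ {B ∈ 𝓑 | ∃ n : ℕ, f^[n] '' Y ⊆ entBall B z} :=
  Set.sInter_subset_sInter fun _ ⟨hB, n, hn⟩ => ⟨hB, n, z, hn⟩

theorem Nonexpansive.map_mem_centreMap {X : Type*} {𝓑 : Set (Set (X × X))} {f : X → X}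
    (hf : Nonexpansive 𝓑 f) {Y : Set X} {x : X} (hx : x ∈ centreMap 𝓑 f Y) :
    f x ∈ centreMap 𝓑 f Y := by
  refine (sInter_anyCentre_subset_sInter_centre 𝓑 f Y (f x)).antisymm ?_
  calc ⋂₀ {B ∈ 𝓑 | ∃ n : ℕ, f^[n] '' Y ⊆ entBall B (f x)}
      ⊆ ⋂₀ {B ∈ 𝓑 | ∃ n : ℕ, f^[n] '' Y ⊆ entBall B x} :=
        Set.sInter_subset_sInter fun B ⟨hB, n, hn⟩ =>
          ⟨hB, n + 1, hf.image_iterate_succ_subset_entBall hB hn⟩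
    _ = _ := hx.symm

theorem stmt3_general {X : Type*} (𝓑 : Set (Set (X × X)))
    (F : X → Set X)
    (f : X → X) (hfF : ∀ x, f x ∈ F x)
    (hf : Nonexpansive 𝓑 f)
    (Y : Set X)
    (x : X) (hx : x ∈ centreMap 𝓑 f Y) :
    f x ∈ centreMap 𝓑 f Y ∧
      ((∃ w, centreMap 𝓑 f Y = {w}) → x ∈ F x) := by
  have hfx := hf.map_mem_centreMap hx
  refine ⟨hfx, ?_⟩
  rintro ⟨w, hw⟩
  rw [hw, Set.mem_singleton_iff] at hx hfx
  have hfixed : f x = x := hfx.trans hx.symm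
  simpa only [hfixed] using hfF x

/-- Theorem 8: let `(X, 𝓑)` be a primitive uniform space and `F : X → 2^X`
multivalued with nonempty values such that each `c_𝓑(F(x))` is a singleton `{f x}` contained
in `F(x)`, with `f` nonexpansive. If `Y ⊆ X` is nonempty, `f(Y) ⊆ Y` and `x ∈ c_𝓑(f, Y)`,
then `f(x) ∈ c_𝓑(f, Y)`; and if `c_𝓑(f, Y)` is a singleton, then `x ∈ F(x)`. -/
theorem stmt3 {X : Type*} [Nonempty X] (𝓑 : Set (Set (X × X)))
    (hUniv : (Set.univ : Set (X × X)) ∈ 𝓑)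
    (F : X → Set X) (hFne : ∀ x, (F x).Nonempty)
    (f : X → X) (hfc : ∀ x, centreSet 𝓑 (F x) = {f x}) (hfF : ∀ x, f x ∈ F x)
    (hf : Nonexpansive 𝓑 f)
    (Y : Set X) (hY : Y.Nonempty) (hfY : f '' Y ⊆ Y)
    (x : X) (hx : x ∈ centreMap 𝓑 f Y) :
    f x ∈ centreMap 𝓑 f Y ∧
      ((∃ w, centreMap 𝓑 f Y = {w}) → x ∈ F x) :=
  stmt3_general 𝓑 F f hfF hf Y x hx
end

section
/- Let Z be a real vector space, let X ⊆ Z be a nonempty convex set, and let F : X → 2^X be a multivalued mapping with nonempty values. Let V ⊆ Z be a nonempty convex set, and for x ∈ X write B(x) := (x + V) ∩ X and, for C ⊆ X, B(C) := (V + C) ∩ X. If F is nonexpansive with respect to B, i.e. F(B(x)) ⊆ B(F(x)) for every x ∈ X, then the mapping co ∘ F given by x ↦ co(F(x)) is also nonexpansive with respect to B, i.e. ⋃_{z ∈ B(x)} co(F(z)) ⊆ (V + co(F(x))) ∩ X for every x ∈ X. -/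
open Pointwise

/-- Corollary 12: let `Z` be a real vector space, `X ⊆ Z` nonempty convex,
`F : X → 2^X` multivalued with nonempty values, `V ⊆ Z` nonempty convex; write
`B(x) = (x + V) ∩ X` and `B(C) = (V + C) ∩ X`. If `F` is nonexpansive w.r.t. `B`, i.e.
`F(B(x)) ⊆ B(F(x))` for every `x ∈ X`, then `co ∘ F` is nonexpansive w.r.t. `B`, i.e.
`⋃_{z ∈ B(x)} co(F(z)) ⊆ (V + co(F(x))) ∩ X` for every `x ∈ X`. -/
theorem stmt7 {Z : Type*} [AddCommGroup Z] [Module ℝ Z]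
    (X : Set Z) (hXne : X.Nonempty) (hX : Convex ℝ X)
    (F : Z → Set Z) (hFne : ∀ z ∈ X, (F z).Nonempty) (hFX : ∀ z ∈ X, F z ⊆ X)
    (V : Set Z) (hVne : V.Nonempty) (hV : Convex ℝ V)
    (h : ∀ x ∈ X, (⋃ z ∈ ({x} + V) ∩ X, F z) ⊆ (V + F x) ∩ X) :
    ∀ x ∈ X, (⋃ z ∈ ({x} + V) ∩ X, convexHull ℝ (F z)) ⊆
      (V + convexHull ℝ (F x)) ∩ X := by
  intro x hx y hy
  simp only [Set.mem_iUnion] at hy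
  obtain ⟨z, hz, hyz⟩ := hy
  have hFz : F z ⊆ (V + F x) ∩ X :=
    (Set.subset_iUnion₂ z hz).trans (h x hx)
  constructor
  · have : convexHull ℝ (F z) ⊆ convexHull ℝ (V + F x) :=
      convexHull_mono (hFz.trans Set.inter_subset_left)
    have h2 : convexHull ℝ (V + F x) = V + convexHull ℝ (F x) := by
      rw [convexHull_add, hV.convexHull_eq]
    exact h2 ▸ this hyz
  · have : convexHull ℝ (F z) ⊆ X := hX.convexHull_subset_iff.mpr (hFX z hz.2)
    exact this hyz
end
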